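/- arXiv:2109.08210 — 8 statements merged into one kernel-verified Lean document; each statement's English description precedes it below -/
import Mathlib

section
/- Let s(m,n) denote the number of saturated covers on the grid [m] × [n]. Then for all m, n ≥ 0, s(m, n+1) = s(m,n) + Σ_{k=0}^{m} C(m+1, k) · s(k, n). -/
/-- A saturated cover on the grid `[m] × [n] = {0,…,m} × {0,…,n}`.
`H i j = true` means the horizontal edge `(i,j) → (i+1,j)` is present (valid for `i < m`, `j ≤ n`);
`V i j = true` means the vertical edge `(i,j) → (i,j+1)` is present (valid for `i ≤ m`, `j < n`). -/
structure SatCover (m n : ℕ) where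
  H : ℕ → ℕ → Bool
  V : ℕ → ℕ → Bool
  H_bound : ∀ i j, H i j = true → i < m ∧ j ≤ n
  V_bound : ∀ i j, V i j = true → i ≤ m ∧ j < n
  H_down : ∀ i j k, k < j → H i j = true → H i k = true
  V_left : ∀ i j k, k < i → V i j = true → V k j = true
  sq₁ : ∀ i j, H i j = true → H i (j+1) = true → V i j = true → V (i+1) j = true
  sq₂ : ∀ i j, H i j = true → H i (j+1) = true → V (i+1) j = true → V i j = true
  sq₃ : ∀ i j, H i j = true → V i j = true → V (i+1) j = true → H i (j+1) = true
  sq₄ : ∀ i j, H i (j+1) = true → V i j = true → V (i+1) j = true → H i j = true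

/-- `satCount m n` is the number of saturated covers on `[m] × [n]`. -/
noncomputable def satCount (m n : ℕ) : ℕ := Nat.card (SatCover m n)

/-!
Encode a saturated cover by its column heights and row widths (a `Profile`). A column is full
when it carries all `n + 1` horizontal edges; a full column meets no row end, so it can be
deleted, and with `N(k, n)` the number of profiles on `[k] × [n]` without full columns,
`s(m, n) = ∑ₐ C(m, a) N(a, n)`. Sorting the profiles on `[m + 1] × [n]` by their first full
column `p`, and the profiles on `[m] × [n + 1]` without full columns by the width of their top
row, both leave the profiles on `[m] × [n]` whose first `p` columns are not full, summed over
`p ≤ m`. Hence `N(m, n + 1) + N(m + 1, n) = s(m, n) + s(m + 1, n)`, and summing against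
`C(m, a)` with Pascal's rule gives the recurrence.
-/

open Finset

-- `height i` is the number of edges `(i, j) → (i + 1, j)` of a cover and `width j` the number of
-- edges `(i, j) → (i, j + 1)`; by (1) and (2) they form initial segments. The last two fields
-- are what remains of the square axiom (3).
@[ext]
structure Profile (m n : ℕ) where
  height : ℕ → ℕ
  width : ℕ → ℕ
  height_le : ∀ i, height i ≤ n + 1
  height_eq_zero : ∀ i, m ≤ i → height i = 0
  width_le : ∀ j, width j ≤ m + 1
  width_eq_zero : ∀ j, n ≤ j → width j = 0
  height_le_of_width_eq : ∀ i j, width j = i + 1 → height i ≤ j + 1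
  width_le_of_height_eq : ∀ i j, height i = j + 1 → width j ≤ i + 1

instance Profile.finite (m n : ℕ) : Finite (Profile m n) := by
  refine Finite.of_injective (β := (Fin m → Fin (n + 2)) × (Fin n → Fin (m + 2)))
    (fun c => (fun i => ⟨c.height i, by have := c.height_le i; omega⟩,
      fun j => ⟨c.width j, by have := c.width_le j; omega⟩)) fun a b hab => ?_
  simp only [Prod.mk.injEq, funext_iff, Fin.ext_iff] at hab
  ext i
  · by_cases hi : i < m
    · exact hab.1 ⟨i, hi⟩
    · rw [a.height_eq_zero i (by omega), b.height_eq_zero i (by omega)]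
  · by_cases hj : i < n
    · exact hab.2 ⟨i, hj⟩
    · rw [a.width_eq_zero i (by omega), b.width_eq_zero i (by omega)]

theorem Bool.eq_decide_lt_find {f : ℕ → Bool}
    (hdown : ∀ j k, k < j → f j = true → f k = true) (hex : ∃ j, f j = false) (j : ℕ) :
    f j = decide (j < Nat.find hex) := by
  by_cases hj : j < Nat.find hex
  · simpa [hj] using Nat.find_min hex hj
  · have hfind := Nat.find_spec hex
    rw [decide_eq_false_iff_not.2 hj, Bool.eq_false_iff]
    intro hfj
    rcases (not_lt.1 hj).lt_or_eq with h | h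
    · simp [hdown _ _ h hfj] at hfind
    · simp [h, hfj] at hfind

namespace SatCover

variable {m n : ℕ}

@[ext]
theorem ext {a b : SatCover m n} (hH : a.H = b.H) (hV : a.V = b.V) : a = b := by
  cases a; cases b; simp_all

theorem exists_H_eq_false (S : SatCover m n) (i : ℕ) : ∃ j, S.H i j = false :=
  ⟨n + 1, Bool.eq_false_iff.2 fun h => by simpa using (S.H_bound i _ h).2⟩

theorem exists_V_eq_false (S : SatCover m n) (j : ℕ) : ∃ i, S.V i j = false :=
  ⟨m + 1, Bool.eq_false_iff.2 fun h => by simpa using (S.V_bound _ j h).1⟩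

noncomputable def height (S : SatCover m n) (i : ℕ) : ℕ := Nat.find (S.exists_H_eq_false i)

noncomputable def width (S : SatCover m n) (j : ℕ) : ℕ := Nat.find (S.exists_V_eq_false j)

theorem H_eq_decide (S : SatCover m n) (i j : ℕ) : S.H i j = decide (j < S.height i) :=
  Bool.eq_decide_lt_find (S.H_down i) _ j

theorem V_eq_decide (S : SatCover m n) (i j : ℕ) : S.V i j = decide (i < S.width j) :=
  Bool.eq_decide_lt_find (fun a b => S.V_left a j b) _ i

def ofProfile (c : Profile m n) : SatCover m n where
  H i j := decide (j < c.height i)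
  V i j := decide (i < c.width j)
  H_bound i j h := by
    have := c.height_le i; have := c.height_eq_zero i
    simp only [decide_eq_true_eq] at h; omega
  V_bound i j h := by
    have := c.width_le j; have := c.width_eq_zero j
    simp only [decide_eq_true_eq] at h; omega
  H_down i j k hk h := by simp only [decide_eq_true_eq] at h ⊢; omega
  V_left i j k hk h := by simp only [decide_eq_true_eq] at h ⊢; omega
  sq₁ i j h₁ h₂ h₃ := by
    have := c.height_le_of_width_eq i j
    simp only [decide_eq_true_eq] at *; omega
  sq₂ i j h₁ h₂ h₃ := by simp only [decide_eq_true_eq] at *; omega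
  sq₃ i j h₁ h₂ h₃ := by
    have := c.width_le_of_height_eq i j
    simp only [decide_eq_true_eq] at *; omega
  sq₄ i j h₁ h₂ h₃ := by simp only [decide_eq_true_eq] at *; omega

noncomputable def toProfile (S : SatCover m n) : Profile m n where
  height := S.height
  width := S.width
  height_le i := by
    have := S.H_bound i (n + 1)
    simp only [H_eq_decide, decide_eq_true_eq] at this; omega
  height_eq_zero i hi := by
    have := S.H_bound i 0
    simp only [H_eq_decide, decide_eq_true_eq] at this; omega
  width_le j := by
    have := S.V_bound (m + 1) j
    simp only [V_eq_decide, decide_eq_true_eq] at this; omega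
  width_eq_zero j hj := by
    have := S.V_bound 0 j
    simp only [V_eq_decide, decide_eq_true_eq] at this; omega
  height_le_of_width_eq i j := by
    have := S.sq₁ i j
    simp only [H_eq_decide, V_eq_decide, decide_eq_true_eq] at this; omega
  width_le_of_height_eq i j := by
    have := S.sq₃ i j
    simp only [H_eq_decide, V_eq_decide, decide_eq_true_eq] at this; omega

noncomputable def equivProfile : SatCover m n ≃ Profile m n where
  toFun := toProfile
  invFun := ofProfile
  left_inv S := by
    ext i j
    · exact (S.H_eq_decide i j).symm
    · exact (S.V_eq_decide i j).symm
  right_inv c := by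
    ext i
    · exact (Nat.find_eq_iff _).2 ⟨by simp [ofProfile], fun k hk => by simp [ofProfile, hk]⟩
    · exact (Nat.find_eq_iff _).2 ⟨by simp [ofProfile], fun k hk => by simp [ofProfile, hk]⟩

end SatCover

theorem satCount_eq_card_profile (m n : ℕ) : satCount m n = Nat.card (Profile m n) :=
  Nat.card_congr SatCover.equivProfile

namespace Profile

variable {m n p q : ℕ}

theorem width_ne_of_height_eq {c : Profile m n} (hp : c.height p = n + 1) (j : ℕ) :
    c.width j ≠ p + 1 := by
  have := c.height_le_of_width_eq p j
  have := c.width_eq_zero j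
  omega

def eraseColumn (hp : p ≤ m) : {c : Profile (m + 1) n // c.height p = n + 1} ≃ Profile m n where
  toFun c :=
    { height i := if i < p then c.1.height i else c.1.height (i + 1)
      width j := if c.1.width j ≤ p then c.1.width j else c.1.width j - 1
      height_le i := by split_ifs <;> exact c.1.height_le _
      height_eq_zero i hi := by
        have := c.1.height_eq_zero (i + 1)
        split_ifs <;> omega
      width_le j := by
        have := c.1.width_le j
        split_ifs <;> omega
      width_eq_zero j hj := by
        have := c.1.width_eq_zero j
        split_ifs <;> omega
      height_le_of_width_eq i j := by
        have := c.1.height_le_of_width_eq i j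
        have := c.1.height_le_of_width_eq (i + 1) j
        have := width_ne_of_height_eq c.2 j
        split_ifs <;> omega
      width_le_of_height_eq i j := by
        have := c.1.width_le_of_height_eq i j
        have := c.1.width_le_of_height_eq (i + 1) j
        split_ifs <;> omega }
  invFun c :=
    ⟨{ height i := if i < p then c.height i else if i = p then n + 1 else c.height (i - 1)
       width j := if c.width j ≤ p then c.width j else c.width j + 1
       height_le i := by
         have := c.height_le i
         have := c.height_le (i - 1)
         split_ifs <;> omega
       height_eq_zero i hi := by
         have := c.height_eq_zero (i - 1)
         split_ifs <;> omega
       width_le j := by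
         have := c.width_le j
         split_ifs <;> omega
       width_eq_zero j hj := by
         have := c.width_eq_zero j
         split_ifs <;> omega
       height_le_of_width_eq i j := by
         have := c.height_le_of_width_eq i j
         have := c.height_le_of_width_eq (i - 1) j
         split_ifs <;> omega
       width_le_of_height_eq i j := by
         have := c.width_le_of_height_eq i j
         have := c.width_le_of_height_eq (i - 1) j
         have := c.width_eq_zero j
         split_ifs <;> omega },
     by simp⟩
  left_inv c := by
    ext i
    · rcases lt_trichotomy i p with h | rfl | h
      · simp [h]
      · simp [c.2]
      · simp [h.not_gt, h.ne', show ¬ i - 1 < p by omega, Nat.sub_add_cancel (by omega : 1 ≤ i)]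
    · have := width_ne_of_height_eq c.2 i
      dsimp only
      split_ifs <;> omega
  right_inv c := by
    ext i
    · dsimp only
      split_ifs <;> first | rfl | omega
    · dsimp only
      split_ifs <;> omega

theorem eraseColumn_height (hp : p ≤ m) (c : {c : Profile (m + 1) n // c.height p = n + 1})
    (i : ℕ) : (eraseColumn hp c).height i = if i < p then c.1.height i else c.1.height (i + 1) :=
  rfl

-- For `q ≤ 1` the right-hand side is all of `Profile m n` (truncated subtraction).
def eraseTopRow (hq : q ≤ m + 1) :
    {c : Profile m (n + 1) // (∀ i < m, c.height i ≤ n + 1) ∧ c.width n = q} ≃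
      {c : Profile m n // ∀ i < q - 1, c.height i ≤ n} where
  toFun c :=
    ⟨{ height := c.1.height
       width j := if j = n then 0 else c.1.width j
       height_le i := by
         have := c.2.1 i
         have := c.1.height_eq_zero i
         omega
       height_eq_zero := c.1.height_eq_zero
       width_le j := by
         have := c.1.width_le j
         split_ifs <;> omega
       width_eq_zero j hj := by
         have := c.1.width_eq_zero j
         split_ifs <;> omega
       height_le_of_width_eq i j := by
         split_ifs
         · simp
         · exact c.1.height_le_of_width_eq i j
       width_le_of_height_eq i j := by
         have := c.1.width_le_of_height_eq i j
         split_ifs <;> omega },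
     fun i hi => by
       have := c.1.width_le_of_height_eq i n
       have := c.2.1 i
       have := c.2.2
       dsimp only
       omega⟩
  invFun c :=
    ⟨{ height := c.1.height
       width j := if j = n then q else c.1.width j
       height_le i := by
         have := c.1.height_le i
         omega
       height_eq_zero := c.1.height_eq_zero
       width_le j := by
         have := c.1.width_le j
         split_ifs <;> omega
       width_eq_zero j hj := by
         have := c.1.width_eq_zero j
         split_ifs <;> omega
       height_le_of_width_eq i j := by
         have := c.1.height_le_of_width_eq i j
         have := c.1.height_le i
         split_ifs <;> omega
       width_le_of_height_eq i j := by
         have := c.1.width_le_of_height_eq i j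
         have := c.2 i
         split_ifs <;> omega },
     fun i _ => c.1.height_le i, by simp⟩
  left_inv c := by
    have := c.2.2
    ext j
    · rfl
    · dsimp only
      split_ifs <;> simp_all
  right_inv c := by
    have := c.1.width_eq_zero n
    ext j
    · rfl
    · dsimp only
      split_ifs <;> simp_all

end Profile

theorem Nat.card_subtype_eq_card_and_add_card_and_not {α : Type*} [Finite α] (P Q : α → Prop) :
    Nat.card {x // P x} = Nat.card {x // P x ∧ Q x} + Nat.card {x // P x ∧ ¬Q x} := by
  classical
  rw [← Nat.card_sum]
  exact Nat.card_congr (((Equiv.subtypeSubtypeEquivSubtypeInter P Q).sumCongr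
    (Equiv.subtypeSubtypeEquivSubtypeInter P _)).symm.trans (Equiv.sumCompl _)).symm

theorem Nat.card_eq_sum_card_fiber_range {α : Type*} [Finite α] (f : α → ℕ) {N : ℕ}
    (hf : ∀ x, f x < N) : Nat.card α = ∑ v ∈ range N, Nat.card {x // f x = v} := by
  let g : α → Fin N := fun x => ⟨f x, hf x⟩
  calc Nat.card α = Nat.card (Σ v, {x // g x = v}) :=
        Nat.card_congr (Equiv.sigmaFiberEquiv g).symm
    _ = ∑ v : Fin N, Nat.card {x // f x = v} := by
      simp only [Nat.card_sigma, g, Fin.ext_iff]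
    _ = ∑ v ∈ range N, Nat.card {x // f x = v} :=
      Fin.sum_univ_eq_sum_range (fun v => Nat.card {x // f x = v}) N

theorem eq_add_sum_range_of_eq_add_succ {M : Type*} [AddCommMonoid M] {g d : ℕ → M} {N : ℕ}
    (h : ∀ p < N, g p = g (p + 1) + d p) : g 0 = g N + ∑ p ∈ range N, d p := by
  induction N with
  | zero => simp
  | succ N ih =>
    rw [ih fun p hp => h p (by omega), h N (by omega), sum_range_succ]
    abel

theorem sum_range_succ_choose_mul (f : ℕ → ℕ) (m : ℕ) :
    ∑ k ∈ range (m + 2), (m + 1).choose k * f k =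
      ∑ k ∈ range (m + 1), m.choose k * f k +
        ∑ k ∈ range (m + 1), m.choose k * f (k + 1) := by
  simpa using sum_choose_succ_mul (R := ℕ) (fun k _ => f k) m

-- Column `i` of a profile on `[m] × [n]` is full when `height i = n + 1`.
noncomputable def prefixNonfullCount (m n p : ℕ) : ℕ :=
  Nat.card {c : Profile m n // ∀ i < p, c.height i ≤ n}

noncomputable def nonfullCount (m n : ℕ) : ℕ := prefixNonfullCount m n m

section Counting

variable {m n p : ℕ}

theorem prefixNonfullCount_zero : prefixNonfullCount m n 0 = satCount m n := by
  rw [satCount_eq_card_profile]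
  exact Nat.card_congr (Equiv.subtypeUnivEquiv fun c i hi => absurd hi (Nat.not_lt_zero i))

theorem card_height_eq_and_prefixNonfull (hp : p ≤ m) :
    Nat.card {c : Profile (m + 1) n // c.height p = n + 1 ∧ ∀ i < p, c.height i ≤ n} =
      prefixNonfullCount m n p :=
  Nat.card_congr ((Equiv.subtypeSubtypeEquivSubtypeInter _ _).symm.trans
    (Equiv.subtypeEquiv (Profile.eraseColumn hp) fun c => forall₂_congr fun i hi => by
      rw [Profile.eraseColumn_height, if_pos hi]))

theorem prefixNonfullCount_eq_add (hp : p ≤ m) :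
    prefixNonfullCount (m + 1) n p =
      prefixNonfullCount (m + 1) n (p + 1) + prefixNonfullCount m n p := by
  rw [← card_height_eq_and_prefixNonfull hp, prefixNonfullCount, prefixNonfullCount,
    Nat.card_subtype_eq_card_and_add_card_and_not _ fun c => c.height p ≤ n]
  congr 1
  · exact Nat.card_congr (Equiv.subtypeEquivRight fun c => Nat.forall_lt_succ_right.symm)
  · refine Nat.card_congr (Equiv.subtypeEquivRight fun c => ?_)
    have := c.height_le p
    exact ⟨fun h => ⟨by omega, h.1⟩, fun h => ⟨h.2, by omega⟩⟩

theorem prefixNonfullCount_add_eq_sum (r p n : ℕ) :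
    prefixNonfullCount (r + p) n r =
      ∑ a ∈ range (p + 1), p.choose a * nonfullCount (r + a) n := by
  induction p generalizing r with
  | zero => simp [nonfullCount]
  | succ p ih =>
    calc prefixNonfullCount (r + (p + 1)) n r
        = prefixNonfullCount ((r + 1) + p) n (r + 1) + prefixNonfullCount (r + p) n r := by
          rw [show r + 1 + p = r + p + 1 by omega]
          exact prefixNonfullCount_eq_add (Nat.le_add_right r p)
      _ = ∑ a ∈ range (p + 1 + 1), (p + 1).choose a * nonfullCount (r + a) n := by
          rw [ih, ih, sum_range_succ_choose_mul, add_comm]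
          simp only [add_assoc, add_comm 1]

theorem satCount_eq_sum_choose_mul_nonfullCount (m n : ℕ) :
    satCount m n = ∑ a ∈ range (m + 1), m.choose a * nonfullCount a n := by
  simpa [prefixNonfullCount_zero] using prefixNonfullCount_add_eq_sum 0 m n

theorem satCount_succ_left (m n : ℕ) :
    satCount (m + 1) n =
      nonfullCount (m + 1) n + ∑ p ∈ range (m + 1), prefixNonfullCount m n p := by
  rw [← prefixNonfullCount_zero]
  exact eq_add_sum_range_of_eq_add_succ fun p hp => prefixNonfullCount_eq_add (by omega)

theorem nonfullCount_succ_right (m n : ℕ) :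
    nonfullCount m (n + 1) = satCount m n + ∑ q ∈ range (m + 1), prefixNonfullCount m n q := by
  have fiber (q : ℕ) (hq : q ≤ m + 1) :
      Nat.card {c : {c : Profile m (n + 1) // ∀ i < m, c.height i ≤ n + 1} // c.1.width n = q} =
        prefixNonfullCount m n (q - 1) :=
    Nat.card_congr ((Equiv.subtypeSubtypeEquivSubtypeInter _ _).trans (Profile.eraseTopRow hq))
  rw [nonfullCount, prefixNonfullCount,
    Nat.card_eq_sum_card_fiber_range (fun c => c.1.width n)
      fun c => Nat.lt_succ_of_le (c.1.width_le n),
    sum_range_succ', fiber 0 (by omega), prefixNonfullCount_zero, add_comm]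
  congr 1
  exact sum_congr rfl fun q hq => fiber (q + 1) (by simp at hq; omega)

theorem nonfullCount_succ_right_add_nonfullCount_succ_left (m n : ℕ) :
    nonfullCount m (n + 1) + nonfullCount (m + 1) n = satCount m n + satCount (m + 1) n := by
  rw [nonfullCount_succ_right, satCount_succ_left]
  ring

end Counting

theorem stmt_1 (m n : ℕ) :
    satCount m (n + 1) =
      satCount m n + ∑ k ∈ Finset.range (m + 1), Nat.choose (m + 1) k * satCount k n := by
  have satCount_succ : satCount (m + 1) n =
      satCount m n + ∑ a ∈ range (m + 1), m.choose a * nonfullCount (a + 1) n := by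
    rw [satCount_eq_sum_choose_mul_nonfullCount (m + 1), satCount_eq_sum_choose_mul_nonfullCount m,
      sum_range_succ_choose_mul]
  have key : satCount m (n + 1) + satCount (m + 1) n =
      satCount m n + ∑ k ∈ range (m + 2), (m + 1).choose k * satCount k n := by
    rw [satCount_eq_sum_choose_mul_nonfullCount m (n + 1), satCount_succ, sum_range_succ_choose_mul,
      add_left_comm, ← sum_add_distrib, ← sum_add_distrib]
    simp only [← mul_add, nonfullCount_succ_right_add_nonfullCount_succ_left]
  rw [sum_range_succ, Nat.choose_self, one_mul] at key
  omega
end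

section
/- For every integer m ≥ 0 and any real (or integer) x, x^m = Σ_{k=1}^{m+1} S(m+1, k) · (x−1)(x−2)···(x−(k−1)), where the product is the falling factorial (x−1)_{k−1} (empty product equal to 1 for k = 1), and S denotes the Stirling number of the second kind. -/
/-!
Write `P k = (x - 1)(x - 2)⋯(x - k)`. Then `x * P k = P (k + 1) + (k + 1) * P k`, which mirrors
the recurrence `S(n+2, k+1) = (k+1) S(n+1, k+1) + S(n+1, k)`; so multiplying the expansion
`x ^ n = ∑ₖ S(n+1, k+1) P k` by `x` gives the expansion of `x ^ (n + 1)`, the boundary terms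
vanishing because `S(n+1, 0) = S(n+1, n+2) = 0`.
-/

open Finset

/-- Stirling numbers of the second kind: `stirling ℓ k` is the number of partitions of an
`ℓ`-element set into `k` nonempty blocks. -/
def stirling : ℕ → ℕ → ℕ
  | 0, 0 => 1
  | 0, _ + 1 => 0
  | _ + 1, 0 => 0
  | l + 1, k + 1 => (k + 1) * stirling l (k + 1) + stirling l k

theorem stirling_eq_stirlingSecond : ∀ n k, stirling n k = Nat.stirlingSecond n k
  | 0, 0 | 0, _ + 1 | _ + 1, 0 => rfl
  | n + 1, k + 1 => by
    rw [stirling, Nat.stirlingSecond_succ_succ, stirling_eq_stirlingSecond n (k + 1),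
      stirling_eq_stirlingSecond n k]

section CommRing

variable {R : Type*} [CommRing R]

theorem mul_prod_range_sub_one_sub (x : R) (k : ℕ) :
    x * ∏ i ∈ range k, (x - 1 - i) =
      ∏ i ∈ range (k + 1), (x - 1 - i) + (k + 1) * ∏ i ∈ range k, (x - 1 - i) := by
  rw [prod_range_succ]
  ring

theorem pow_eq_sum_stirlingSecond_mul_prod_range (x : R) (n : ℕ) :
    x ^ n = ∑ k ∈ range (n + 1),
      (Nat.stirlingSecond (n + 1) (k + 1) : R) * ∏ i ∈ range k, (x - 1 - i) := by
  induction n with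
  | zero => simp [Nat.stirlingSecond_self]
  | succ n ih =>
    set P : ℕ → R := fun k ↦ ∏ i ∈ range k, (x - 1 - i)
    set S : ℕ → R := fun k ↦ (Nat.stirlingSecond (n + 1) k : R)
    have hS_zero : S 0 = 0 := by simp [S]
    have hS_top : S (n + 2) = 0 := by
      simp [S, Nat.stirlingSecond_eq_zero_of_lt (Nat.lt_succ_self (n + 1))]
    calc x ^ (n + 1)
        = ∑ k ∈ range (n + 1), S (k + 1) * (x * P k) := by
          rw [pow_succ', ih, mul_sum]
          exact sum_congr rfl fun k _ ↦ by ring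
      _ = ∑ k ∈ range (n + 2), (k + 1) * S (k + 1) * P k
            + ∑ k ∈ range (n + 2), S k * P k := by
          rw [sum_range_succ _ (n + 1), sum_range_succ' (fun k ↦ S k * P k), hS_zero, hS_top]
          simp only [P, mul_prod_range_sub_one_sub, mul_zero, zero_mul, add_zero,
            ← sum_add_distrib]
          exact sum_congr rfl fun k _ ↦ by ring
      _ = ∑ k ∈ range (n + 2),
            (Nat.stirlingSecond (n + 2) (k + 1) : R) * P k := by
          rw [← sum_add_distrib]
          refine sum_congr rfl fun k _ ↦ ?_
          rw [Nat.stirlingSecond_succ_succ]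
          push_cast
          ring

end CommRing

theorem stmt_5 (m : ℕ) (x : ℝ) :
    x ^ m =
      ∑ k ∈ Finset.Icc 1 (m + 1),
        (stirling (m + 1) k : ℝ) * ∏ i ∈ Finset.range (k - 1), (x - 1 - i) := by
  rw [pow_eq_sum_stirlingSecond_mul_prod_range, ← Ico_add_one_right_eq_Icc, sum_Ico_eq_sum_range]
  simp [stirling_eq_stirlingSecond, add_comm]
end

section
/- Let m, n ≥ 0 and let S be a set of cover relations (grid edges) in [m] × [n] that satisfies conditions (1), (2), (3) of a saturated cover. Then S, viewed as a relation generated under reflexivity, restriction and transitivity, yields a transfer system on the lattice [m] × [n] that is saturated (satisfies two-out-of-three) and whose set of cover relations is exactly S. Concretely: if the transitive-reflexive closure of S relates (i,j) to (i+u, j+v), then every edge of the u × v subgrid with corners (i,j) and (i+u,j+v) belongs to S. -/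
/-- The one-step relation generated by the edges of `S`. -/
def gridStep {m n : ℕ} (S : SatCover m n) : ℕ × ℕ → ℕ × ℕ → Prop :=
  fun p q =>
    (q = (p.1 + 1, p.2) ∧ S.H p.1 p.2 = true) ∨ (q = (p.1, p.2 + 1) ∧ S.V p.1 p.2 = true)


private lemma gridStep_mono {m n : ℕ} (S : SatCover m n) {p q : ℕ × ℕ}
    (h : Relation.ReflTransGen (gridStep S) p q) : p.1 ≤ q.1 ∧ p.2 ≤ q.2 := by
  induction h with
  | refl => exact ⟨le_refl _, le_refl _⟩
  | tail _ hstep ih =>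
    rcases hstep with ⟨rfl, _⟩ | ⟨rfl, _⟩ <;> simp <;> omega

private lemma grid_main {m n : ℕ} (S : SatCover m n) :
    ∀ N i j u v, u + v ≤ N →
    Relation.ReflTransGen (gridStep S) (i, j) (i + u, j + v) →
    (∀ a b, i ≤ a → a < i + u → j ≤ b → b ≤ j + v → S.H a b = true) ∧
    (∀ a b, i ≤ a → a ≤ i + u → j ≤ b → b < j + v → S.V a b = true) := by
  intro N
  induction N with
  | zero =>
    intro i j u v hN _
    constructor <;> intro a b h1 h2 h3 h4 <;> omega
  | succ N ih =>
    intro i j u v hN h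
    rcases (Relation.ReflTransGen.cases_head h) with heq | ⟨c, hstep, hrest⟩
    · have hu0 : u = 0 := by have := congrArg Prod.fst heq; simp at this; omega
      have hv0 : v = 0 := by have := congrArg Prod.snd heq; simp at this; omega
      subst hu0; subst hv0
      constructor <;> intro a b h1 h2 h3 h4 <;> omega
    · rcases hstep with ⟨hc, hH⟩ | ⟨hc, hV⟩
      · -- horizontal first step
        subst hc
        have hmono := gridStep_mono S hrest
        simp at hmono
        have hu1 : 1 ≤ u := by omega
        obtain ⟨u', rfl⟩ : ∃ u', u = u' + 1 := ⟨u - 1, by omega⟩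
        have hrest' : Relation.ReflTransGen (gridStep S) (i + 1, j) ((i + 1) + u', j + v) := by
          convert hrest using 2 <;> omega
        obtain ⟨A, B⟩ := ih (i + 1) j u' v (by omega) hrest'
        have hVcol : ∀ b, j ≤ b → b < j + v → S.V i b = true := by
          intro b hb1 hb2
          exact S.V_left (i + 1) b i (by omega)
            (B (i + 1) b (by omega) (by omega) hb1 (by omega))
        have hHcol : ∀ d, d ≤ v → S.H i (j + d) = true := by
          intro d
          induction d with
          | zero => intro _; simpa using hH
          | succ d ihd =>
            intro hd
            have h1 := ihd (by omega)
            have h2 := hVcol (j + d) (by omega) (by omega)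
            have h3 := B (i + 1) (j + d) (by omega) (by omega) (by omega) (by omega)
            exact S.sq₃ i (j + d) h1 h2 h3
        constructor
        · intro a b h1 h2 h3 h4
          rcases Nat.eq_or_lt_of_le h1 with rfl | ha
          · have := hHcol (b - j) (by omega)
            convert this using 2; omega
          · exact A a b (by omega) (by omega) h3 (by omega)
        · intro a b h1 h2 h3 h4
          rcases Nat.eq_or_lt_of_le h1 with rfl | ha
          · exact hVcol b h3 h4
          · exact B a b (by omega) (by omega) h3 (by omega)
      · -- vertical first step
        subst hc
        have hmono := gridStep_mono S hrest
        simp at hmono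
        have hv1 : 1 ≤ v := by omega
        obtain ⟨v', rfl⟩ : ∃ v', v = v' + 1 := ⟨v - 1, by omega⟩
        have hrest' : Relation.ReflTransGen (gridStep S) (i, j + 1) (i + u, (j + 1) + v') := by
          convert hrest using 2 <;> omega
        obtain ⟨A, B⟩ := ih i (j + 1) u v' (by omega) hrest'
        have hHrow : ∀ a, i ≤ a → a < i + u → S.H a j = true := by
          intro a ha1 ha2
          exact S.H_down a (j + 1) j (by omega)
            (A a (j + 1) ha1 ha2 (by omega) (by omega))
        have hVrow : ∀ d, d ≤ u → S.V (i + d) j = true := by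
          intro d
          induction d with
          | zero => intro _; simpa using hV
          | succ d ihd =>
            intro hd
            have h1 := hHrow (i + d) (by omega) (by omega)
            have h2 := A (i + d) (j + 1) (by omega) (by omega) (by omega) (by omega)
            have h3 := ihd (by omega)
            exact S.sq₁ (i + d) j h1 h2 h3
        constructor
        · intro a b h1 h2 h3 h4
          rcases Nat.eq_or_lt_of_le h3 with rfl | hb
          · exact hHrow a h1 h2
          · exact A a b h1 h2 (by omega) (by omega)
        · intro a b h1 h2 h3 h4
          rcases Nat.eq_or_lt_of_le h3 with rfl | hb
          · have := hVrow (a - i) (by omega)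
            convert this using 2; omega
          · exact B a b h1 h2 (by omega) (by omega)

theorem stmt_8 (m n : ℕ) (S : SatCover m n) (i j u v : ℕ)
    (hu : i + u ≤ m) (hv : j + v ≤ n)
    (h : Relation.ReflTransGen (gridStep S) (i, j) (i + u, j + v)) :
    (∀ a b, i ≤ a → a < i + u → j ≤ b → b ≤ j + v → S.H a b = true) ∧
    (∀ a b, i ≤ a → a ≤ i + u → j ≤ b → b < j + v → S.V a b = true) := by
  exact grid_main S (u + v) i j u v le_rfl h
end

section
/- Let S be the set of cover relations of a saturated transfer system → on the grid lattice [m] × [n]. Then S satisfies: (1) if (i,j)→(i+1,j) ∈ S then (i,k)→(i+1,k) ∈ S for all k < j; (2) if (i,j)→(i,j+1) ∈ S then (k,j)→(k,j+1) ∈ S for all k < i; (3) if three of the four edges of any unit square belong to S, then so does the fourth. -/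
/-- A saturated transfer system on the grid lattice `[m] × [n] = {0,…,m} × {0,…,n}` (ordered
componentwise): a reflexive, transitive relation refining `≤`, closed under restriction,
and satisfying the two-out-of-three (saturation) property. -/
structure SatGridTS (m n : ℕ) where
  rel : ℕ × ℕ → ℕ × ℕ → Prop
  dom : ∀ p q, rel p q → p.1 ≤ m ∧ p.2 ≤ n ∧ q.1 ≤ m ∧ q.2 ≤ n
  le_of_rel : ∀ p q, rel p q → p.1 ≤ q.1 ∧ p.2 ≤ q.2
  refl : ∀ p : ℕ × ℕ, p.1 ≤ m → p.2 ≤ n → rel p p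
  trans : ∀ p q r, rel p q → rel q r → rel p r
  restrict : ∀ a b c d x y, rel (a, b) (c, d) → x ≤ c → y ≤ d →
    rel (min a x, min b y) (x, y)
  sat : ∀ L K H : ℕ × ℕ, L.1 ≤ K.1 → L.2 ≤ K.2 → K.1 ≤ H.1 → K.2 ≤ H.2 →
    H.1 ≤ m → H.2 ≤ n →
    ((rel L K ∧ rel L H → rel K H) ∧
     (rel L K ∧ rel K H → rel L H) ∧
     (rel L H ∧ rel K H → rel L K))

theorem stmt_9 (m n : ℕ) (T : SatGridTS m n) :
    (∀ i j k, T.rel (i, j) (i + 1, j) → k < j → T.rel (i, k) (i + 1, k)) ∧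
    (∀ i j k, T.rel (i, j) (i, j + 1) → k < i → T.rel (k, j) (k, j + 1)) ∧
    (∀ i j,
      (T.rel (i, j) (i + 1, j) ∧ T.rel (i, j + 1) (i + 1, j + 1) ∧ T.rel (i, j) (i, j + 1) →
        T.rel (i + 1, j) (i + 1, j + 1)) ∧
      (T.rel (i, j) (i + 1, j) ∧ T.rel (i, j + 1) (i + 1, j + 1) ∧
          T.rel (i + 1, j) (i + 1, j + 1) → T.rel (i, j) (i, j + 1)) ∧
      (T.rel (i, j) (i + 1, j) ∧ T.rel (i, j) (i, j + 1) ∧ T.rel (i + 1, j) (i + 1, j + 1) →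
        T.rel (i, j + 1) (i + 1, j + 1)) ∧
      (T.rel (i, j + 1) (i + 1, j + 1) ∧ T.rel (i, j) (i, j + 1) ∧
          T.rel (i + 1, j) (i + 1, j + 1) → T.rel (i, j) (i + 1, j))) := by
  refine ⟨?_, ?_, ?_⟩
  · intro i j k h hk
    have := T.restrict i j (i+1) j (i+1) k h (le_refl _) (le_of_lt hk)
    simpa [Nat.min_eq_left (Nat.le_succ i), Nat.min_eq_right (le_of_lt hk)] using this
  · intro i j k h hk
    have := T.restrict i j i (j+1) k (j+1) h (le_of_lt hk) (le_refl _)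
    simpa [Nat.min_eq_left (Nat.le_succ j), Nat.min_eq_right (le_of_lt hk)] using this
  · intro i j
    have comp : ∀ {p q r}, T.rel p q → T.rel q r → T.rel p r := fun h1 h2 => T.trans _ _ _ h1 h2
    refine ⟨?_, ?_, ?_, ?_⟩
    · rintro ⟨h1, h2, h3⟩
      have hd := T.dom _ _ h2
      have hdiag : T.rel (i, j) (i+1, j+1) := comp h3 h2
      exact (T.sat (i,j) (i+1,j) (i+1,j+1) (by simp) (le_refl _) (le_refl _) (Nat.le_succ _)
        hd.2.2.1 hd.2.2.2).1 ⟨h1, hdiag⟩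
    · rintro ⟨h1, h2, h3⟩
      have hdiag : T.rel (i, j) (i+1, j+1) := comp h1 h3
      have := T.restrict i j (i+1) (j+1) i (j+1) hdiag (Nat.le_succ _) (le_refl _)
      simpa [Nat.min_eq_left (Nat.le_succ j)] using this
    · rintro ⟨h1, h2, h3⟩
      have hd := T.dom _ _ h3
      have hdiag : T.rel (i, j) (i+1, j+1) := comp h1 h3
      exact (T.sat (i,j) (i,j+1) (i+1,j+1) (le_refl _) (Nat.le_succ _) (Nat.le_succ _)
        (le_refl _) hd.2.2.1 hd.2.2.2).1 ⟨h2, hdiag⟩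
    · rintro ⟨h1, h2, h3⟩
      have hdiag : T.rel (i, j) (i+1, j+1) := comp h2 h1
      have := T.restrict i j (i+1) (j+1) (i+1) j hdiag (le_refl _) (Nat.le_succ _)
      simpa [Nat.min_eq_left (Nat.le_succ i)] using this
end

section
/- Let p, q be distinct primes and n ≥ 0. Suppose I ⊆ ℤ/q^nℤ is an index set. Define J = {α·q^n + i : 0 ≤ α < p, i ∈ I} ⊆ ℤ/(p·q^n)ℤ. Then J is an index set, J mod q^n = I, q^n ∈ J, and J + q^n = J (so that in the transfer system 𝓕_J, the relation C_{q^n} → C_{p q^n} holds). -/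
theorem stmt_12 (p q n : ℕ) (hp : p.Prime) (hq : q.Prime) (hpq : p ≠ q)
    (I : Set (ZMod (q ^ n))) (hI0 : 0 ∈ I) (hIneg : ∀ x ∈ I, -x ∈ I) :
    let J : Set (ZMod (p * q ^ n)) :=
      {x | ∃ α < p, ∃ i ∈ I, x = ((α * q ^ n + i.val : ℕ) : ZMod (p * q ^ n))}
    (0 ∈ J) ∧ (∀ x ∈ J, -x ∈ J) ∧
    (⇑(ZMod.castHom (dvd_mul_left (q ^ n) p) (ZMod (q ^ n))) '' J = I) ∧
    (((q ^ n : ℕ) : ZMod (p * q ^ n)) ∈ J) ∧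
    ((fun x => x + ((q ^ n : ℕ) : ZMod (p * q ^ n))) '' J = J) := by
  intro J
  have hq0 : 0 < q ^ n := pow_pos hq.pos n
  haveI : NeZero (q ^ n) := ⟨hq0.ne'⟩
  have hval0 : ((0 : ZMod (q ^ n))).val = 0 := ZMod.val_zero
  have key : ∀ a b : ℕ, a + b = p * q ^ n →
      ((b : ℕ) : ZMod (p * q ^ n)) = -((a : ℕ) : ZMod (p * q ^ n)) := by
    intro a b h
    have h2 : ((a + b : ℕ) : ZMod (p * q ^ n)) = 0 := by rw [h]; exact ZMod.natCast_self _
    push_cast at h2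
    linear_combination h2
  have keq : ∀ a b : ℕ, a = b →
      ((a : ℕ) : ZMod (p * q ^ n)) = ((b : ℕ) : ZMod (p * q ^ n)) := fun a b h => by rw [h]
  have kdrop : ∀ a : ℕ, ((p * q ^ n + a : ℕ) : ZMod (p * q ^ n)) = ((a : ℕ) : ZMod (p * q ^ n)) := by
    intro a
    rw [Nat.cast_add, ZMod.natCast_self, zero_add]
  refine ⟨⟨0, hp.pos, 0, hI0, by simp [hval0]⟩, ?_, ?_, ⟨1, hp.one_lt, 0, hI0, by simp [hval0]⟩, ?_⟩
  · -- closed under negation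
    rintro x ⟨α, hα, i, hi, rfl⟩
    by_cases h0 : i.val = 0
    · have hi0 : i = 0 := ZMod.val_injective (q ^ n) (h0.trans hval0.symm)
      by_cases hα0 : α = 0
      · subst hα0
        exact ⟨0, hp.pos, 0, hI0, by simp [h0, hval0]⟩
      · refine ⟨p - α, Nat.sub_lt hp.pos (Nat.pos_of_ne_zero hα0), 0, hI0, ?_⟩
        rw [hval0]
        refine (key (α * q ^ n + i.val) ((p - α) * q ^ n + 0) ?_).symm
        have hs : α + (p - α) = p := by omega
        calc α * q ^ n + i.val + ((p - α) * q ^ n + 0)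
            = (α + (p - α)) * q ^ n + i.val := by ring
          _ = p * q ^ n := by rw [hs, h0]; ring
    · have hine : i ≠ 0 := fun h => h0 (by rw [h, hval0])
      refine ⟨p - 1 - α, by omega, -i, hIneg i hi, ?_⟩
      have hnv : (-i).val = q ^ n - i.val := by
        rw [ZMod.neg_val, if_neg hine]
      rw [hnv]
      refine (key (α * q ^ n + i.val) ((p - 1 - α) * q ^ n + (q ^ n - i.val)) ?_).symm
      have hlt : i.val < q ^ n := ZMod.val_lt i
      have hs : α + (p - 1 - α) + 1 = p := by omega
      have h2 : i.val + (q ^ n - i.val) = q ^ n := by omega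
      calc α * q ^ n + i.val + ((p - 1 - α) * q ^ n + (q ^ n - i.val))
          = (α + (p - 1 - α)) * q ^ n + (i.val + (q ^ n - i.val)) := by ring
        _ = (α + (p - 1 - α)) * q ^ n + q ^ n := by rw [h2]
        _ = (α + (p - 1 - α) + 1) * q ^ n := by ring
        _ = p * q ^ n := by rw [hs]
  · -- image = I
    ext x
    constructor
    · rintro ⟨y, ⟨α, hα, i, hi, rfl⟩, rfl⟩
      have : (ZMod.castHom (dvd_mul_left (q ^ n) p) (ZMod (q ^ n)))
          (((α * q ^ n + i.val : ℕ) : ZMod (p * q ^ n))) = i := by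
        rw [map_natCast, Nat.cast_add, Nat.cast_mul, ZMod.natCast_self, mul_zero, zero_add,
          ZMod.natCast_val, ZMod.cast_id]
      rw [this]; exact hi
    · intro hx
      refine ⟨((0 * q ^ n + x.val : ℕ) : ZMod (p * q ^ n)), ⟨0, hp.pos, x, hx, rfl⟩, ?_⟩
      rw [map_natCast, Nat.cast_add, Nat.cast_mul, ZMod.natCast_self, mul_zero, zero_add,
        ZMod.natCast_val, ZMod.cast_id]
  · -- J + q^n = J
    ext x
    constructor
    · rintro ⟨y, ⟨α, hα, i, hi, rfl⟩, rfl⟩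
      simp only
      have hsum : ((α * q ^ n + i.val : ℕ) : ZMod (p * q ^ n)) + ((q ^ n : ℕ) : ZMod (p * q ^ n))
          = (((α + 1) * q ^ n + i.val : ℕ) : ZMod (p * q ^ n)) := by
        push_cast; ring
      rw [hsum]
      by_cases hcase : α + 1 < p
      · exact ⟨α + 1, hcase, i, hi, rfl⟩
      · have hap : α + 1 = p := by omega
        refine ⟨0, hp.pos, i, hi, ?_⟩
        rw [hap]
        exact (kdrop i.val).trans (keq i.val (0 * q ^ n + i.val) (by ring))
    · rintro ⟨α, hα, i, hi, rfl⟩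
      by_cases hα0 : α = 0
      · subst hα0
        refine ⟨(((p - 1) * q ^ n + i.val : ℕ) : ZMod (p * q ^ n)), ⟨p - 1, by omega, i, hi, rfl⟩, ?_⟩
        simp only
        have : (((p - 1) * q ^ n + i.val : ℕ) : ZMod (p * q ^ n)) + ((q ^ n : ℕ) : ZMod (p * q ^ n))
            = (((p - 1 + 1) * q ^ n + i.val : ℕ) : ZMod (p * q ^ n)) := by push_cast; ring
        rw [this]
        have hp1 : p - 1 + 1 = p := by omega
        rw [hp1]
        exact (kdrop i.val).trans (keq i.val (0 * q ^ n + i.val) (by ring))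
      · refine ⟨(((α - 1) * q ^ n + i.val : ℕ) : ZMod (p * q ^ n)), ⟨α - 1, by omega, i, hi, rfl⟩, ?_⟩
        simp only
        have : (((α - 1) * q ^ n + i.val : ℕ) : ZMod (p * q ^ n)) + ((q ^ n : ℕ) : ZMod (p * q ^ n))
            = (((α - 1 + 1) * q ^ n + i.val : ℕ) : ZMod (p * q ^ n)) := by push_cast; ring
        rw [this]
        have : α - 1 + 1 = α := by omega
        rw [this]
end

section
/- Let p, q be distinct primes, n ≥ 0, and suppose I ⊆ ℤ/(p·q^n)ℤ is an index set containing a·q^n for some 0 < a < p. Define J = {α·p·q^n + i : 0 ≤ α < q, i ∈ I} ⊆ ℤ/(p·q^{n+1})ℤ. Then J is an index set, J mod (p·q^n) = I, J + p·q^n = J, and J contains a nonzero multiple of q^{n+1}. -/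
/-!
The set `J` is exactly the preimage of `I` under reduction `ℤ/(p q^{n+1}) → ℤ/(p q^n)`:
the representative `x.val` of a residue splits as `α · p q^n + r` with `α < q` and `r < p q^n`.
Being an index set, lying over `I` and being stable under adding `p q^n` (an element of the
kernel) are then properties of any preimage under a surjective ring map. For the last claim pick
`b` with `b q ≡ a (mod p)`; then `b q^{n+1} ≡ a q^n (mod p q^n)`, so `b q^{n+1}` lies over
`a q^n ∈ I`, which is nonzero because `0 < a q^n < p q^n`.
-/

theorem ZMod.setOf_natCast_mul_add_val_eq_preimage_castHom {N M q : ℕ} [NeZero N] [NeZero M]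
    (hM : M = q * N) (h : N ∣ M) (I : Set (ZMod N)) :
    {x : ZMod M | ∃ α < q, ∃ i ∈ I, x = ((α * N + i.val : ℕ) : ZMod M)} =
      ZMod.castHom h (ZMod N) ⁻¹' I := by
  ext x
  constructor
  · rintro ⟨α, -, i, hi, rfl⟩
    rwa [Set.mem_preimage, map_natCast, Nat.cast_add, Nat.cast_mul, ZMod.natCast_self, mul_zero,
      zero_add, ZMod.natCast_zmod_val]
  · intro hx
    have hcast : ZMod.castHom h (ZMod N) x = (x.val : ZMod N) := ZMod.cast_eq_val x
    refine ⟨x.val / N, ?_, _, hx, ?_⟩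
    · exact Nat.div_lt_of_lt_mul (by rw [mul_comm, ← hM]; exact x.val_lt)
    · rw [hcast, ZMod.val_natCast, Nat.div_add_mod', ZMod.natCast_zmod_val]

theorem image_add_right_preimage_of_map_eq_zero {F R S : Type*} [AddGroup R] [AddGroup S]
    [FunLike F R S] [AddMonoidHomClass F R S] (f : F) {c : R} (hc : f c = 0) (I : Set S) :
    (fun x => x + c) '' (f ⁻¹' I) = f ⁻¹' I := by
  ext x
  simp [Set.image_add_right, hc]

theorem Nat.exists_mul_modEq_of_coprime {p q : ℕ} [NeZero p] (hqp : q.Coprime p) (a : ℕ) :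
    ∃ b, b * q ≡ a [MOD p] := by
  refine ⟨((a : ZMod p) * ↑(ZMod.unitOfCoprime q hqp)⁻¹).val, ?_⟩
  rw [← ZMod.natCast_eq_natCast_iff, Nat.cast_mul, ZMod.natCast_zmod_val,
    ← ZMod.coe_unitOfCoprime q hqp, mul_assoc, Units.inv_mul, mul_one]

theorem Nat.exists_mul_pow_succ_modEq_mul_pow {p q : ℕ} [NeZero p] (hqp : q.Coprime p)
    (a n : ℕ) : ∃ b, b * q ^ (n + 1) ≡ a * q ^ n [MOD p * q ^ n] := by
  obtain ⟨b, hb⟩ := Nat.exists_mul_modEq_of_coprime hqp a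
  refine ⟨b, ?_⟩
  rw [pow_succ, mul_comm (q ^ n) q, ← mul_assoc]
  exact hb.mul_right' _

theorem stmt_13 (p q n a : ℕ) (hp : p.Prime) (hq : q.Prime) (hpq : p ≠ q)
    (ha1 : 0 < a) (ha2 : a < p) (I : Set (ZMod (p * q ^ n))) (hI0 : 0 ∈ I)
    (hIneg : ∀ x ∈ I, -x ∈ I)
    (haI : ((a * q ^ n : ℕ) : ZMod (p * q ^ n)) ∈ I) :
    let J : Set (ZMod (p * q ^ (n + 1))) :=
      {x | ∃ α < q, ∃ i ∈ I, x = ((α * (p * q ^ n) + i.val : ℕ) : ZMod (p * q ^ (n + 1)))}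
    (0 ∈ J) ∧ (∀ x ∈ J, -x ∈ J) ∧
    (⇑(ZMod.castHom
        (show p * q ^ n ∣ p * q ^ (n + 1) from
          mul_dvd_mul_left p (pow_dvd_pow q (Nat.le_succ n)))
        (ZMod (p * q ^ n))) '' J = I) ∧
    ((fun x => x + ((p * q ^ n : ℕ) : ZMod (p * q ^ (n + 1)))) '' J = J) ∧
    (∃ x ∈ J, x ≠ 0 ∧ ∃ b : ℕ, x = ((b * q ^ (n + 1) : ℕ) : ZMod (p * q ^ (n + 1)))) := by
  intro J
  have : NeZero p := ⟨hp.ne_zero⟩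
  have : NeZero q := ⟨hq.ne_zero⟩
  set f := ZMod.castHom (mul_dvd_mul_left p (pow_dvd_pow q (Nat.le_succ n))) (ZMod (p * q ^ n))
  have hJ : J = f ⁻¹' I :=
    ZMod.setOf_natCast_mul_add_val_eq_preimage_castHom (by ring) _ I
  obtain ⟨b, hb⟩ :=
    Nat.exists_mul_pow_succ_modEq_mul_pow ((Nat.coprime_primes hq hp).2 hpq.symm) a n
  have hfb : f (b * q ^ (n + 1) : ℕ) = (a * q ^ n : ℕ) := by
    rw [map_natCast]
    exact (ZMod.natCast_eq_natCast_iff _ _ _).2 hb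
  have haq_ne_zero : ((a * q ^ n : ℕ) : ZMod (p * q ^ n)) ≠ 0 := by
    rw [Ne, ZMod.natCast_eq_zero_iff]
    exact fun h => (Nat.mul_pos ha1 (pow_pos hq.pos n)).ne'
      (Nat.eq_zero_of_dvd_of_lt h (Nat.mul_lt_mul_of_pos_right ha2 (pow_pos hq.pos n)))
  rw [hJ]
  refine ⟨by simpa using hI0, fun x hx => by simpa using hIneg _ hx,
    Set.image_preimage_eq I (ZMod.castHom_surjective _),
    image_add_right_preimage_of_map_eq_zero f (by rw [map_natCast, ZMod.natCast_self]) I,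
    _, by rw [Set.mem_preimage, hfb]; exact haI,
    fun h0 => haq_ne_zero (by rw [← hfb, h0, map_zero]), b, rfl⟩
end

section
/- Fix m, n ≥ 0 and a proper subset A ⊊ {0,...,m}. The number of saturated covers S on [m] × [n+1] with c(S) = A equals s(|A|, n), the number of saturated covers on [|A|] × [n]. If A = {0,...,m}, the number of saturated covers with c(S) = A equals s(m, n). -/
/-- The set `c(S) ⊆ {0,…,m}` associated to a saturated cover `S` on `[m] × [n+1]`:
with `k` the largest index such that the vertical edge `(k,n) → (k,n+1)` is in `S`
(`k = -1` if none), `c(S) = {0,…,k} ∪ {i : i > k + 1 and (i-1,n+1) → (i,n+1) ∉ S}`.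
(Membership `i ≤ k` is equivalent to `V i n`, and `i > k + 1` to `1 ≤ i ∧ ¬ V (i-1) n`.) -/
def cset (m n : ℕ) (S : SatCover m (n + 1)) : Finset ℕ :=
  (Finset.range (m + 1)).filter
    (fun i => S.V i n = true ∨
      (1 ≤ i ∧ S.V (i - 1) n = false ∧ S.H (i - 1) (n + 1) = false))

namespace Nat

variable {p : ℕ → Prop} [DecidablePred p] {N k l : ℕ}

theorem nth_mem_of_lt_count (h : k < count p N) : p (nth p k) :=
  nth_mem k fun hf => h.trans_le (count_le_card hf N)

theorem count_nth_of_lt_count (h : k < count p N) : count p (nth p k) = k :=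
  count_nth fun hf => h.trans_le (count_le_card hf N)

theorem nth_le_nth_of_lt_count (hkl : k ≤ l) (h : l < count p N) : nth p k ≤ nth p l :=
  nth_le_nth' hkl fun hf => h.trans_le (count_le_card hf N)

variable (p N) in
noncomputable def nthBelow (k : ℕ) : ℕ := if k < count p N then nth p k else N

theorem nthBelow_le : nthBelow p N k ≤ N := by
  unfold nthBelow
  split_ifs with h
  · exact (nth_lt_of_lt_count h).le
  · exact le_rfl

theorem nthBelow_mem (h : k < count p N) : p (nthBelow p N k) := by
  rw [nthBelow, if_pos h]
  exact nth_mem_of_lt_count h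

theorem nthBelow_of_count_le (h : count p N ≤ k) : nthBelow p N k = N := by
  rw [nthBelow, if_neg h.not_gt]

theorem count_nthBelow (h : k ≤ count p N) : count p (nthBelow p N k) = k := by
  rcases h.lt_or_eq with h | rfl
  · rw [nthBelow, if_pos h, count_nth_of_lt_count h]
  · rw [nthBelow_of_count_le le_rfl]

theorem nthBelow_count {i : ℕ} (hi : p i ∧ i < N ∨ i = N) : nthBelow p N (count p i) = i := by
  rcases hi with ⟨hp, hlt⟩ | rfl
  · rw [nthBelow, if_pos (count_strict_mono hp hlt), nth_count hp]
  · exact nthBelow_of_count_le le_rfl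

theorem nthBelow_mono : Monotone (nthBelow p N) := by
  intro k l hkl
  by_cases hl : l < count p N
  · rw [nthBelow, nthBelow, if_pos hl, if_pos (hkl.trans_lt hl)]
    exact nth_le_nth_of_lt_count hkl hl
  · rw [nthBelow_of_count_le (not_lt.1 hl)]
    exact nthBelow_le

end Nat

theorem Nat.lt_find_iff_of_downward_closed {p : ℕ → Bool} (h : ∃ j, p j = false)
    (hp : ∀ j k, k < j → p j = true → p k = true) (j : ℕ) :
    p j = true ↔ j < Nat.find h := by
  rw [Nat.lt_find_iff]
  refine ⟨fun hj k hk => ?_, fun hj => by simpa using hj j le_rfl⟩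
  rcases hk.lt_or_eq with hk | rfl
  · simp [hp j k hk hj]
  · simp [hj]

/-- A saturated cover in terms of thresholds: `H i j ↔ j < a i` and `V i j ↔ i < b j`.
Of the four square axioms only two are not automatic, namely `a_le_of_b_eq` and
`b_le_of_a_eq`. -/
@[ext]
structure ThresholdCover (m n : ℕ) where
  a : ℕ → ℕ
  b : ℕ → ℕ
  a_le : ∀ i, a i ≤ n + 1
  a_eq_zero : ∀ i, m ≤ i → a i = 0
  b_le : ∀ j, b j ≤ m + 1
  b_eq_zero : ∀ j, n ≤ j → b j = 0
  a_le_of_b_eq : ∀ i j, b j = i + 1 → a i ≤ j + 1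
  b_le_of_a_eq : ∀ i j, a i = j + 1 → b j ≤ i + 1

attribute [ext] SatCover

namespace SatCover

variable {m n : ℕ} (S : SatCover m n)

theorem H_eq_false_of_not_bound {i j : ℕ} (h : ¬ (i < m ∧ j ≤ n)) : S.H i j = false :=
  Bool.eq_false_iff.2 fun hH => h (S.H_bound i j hH)

theorem V_eq_false_of_not_bound {i j : ℕ} (h : ¬ (i ≤ m ∧ j < n)) : S.V i j = false :=
  Bool.eq_false_iff.2 fun hV => h (S.V_bound i j hV)

def hThreshold (i : ℕ) : ℕ :=
  Nat.find (⟨n + 1, S.H_eq_false_of_not_bound (by omega)⟩ : ∃ j, S.H i j = false)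

def vThreshold (j : ℕ) : ℕ :=
  Nat.find (⟨m + 1, S.V_eq_false_of_not_bound (by omega)⟩ : ∃ i, S.V i j = false)

theorem H_iff (i j : ℕ) : S.H i j = true ↔ j < S.hThreshold i :=
  Nat.lt_find_iff_of_downward_closed _ (fun j k hk => S.H_down i j k hk) j

theorem V_iff (i j : ℕ) : S.V i j = true ↔ i < S.vThreshold j :=
  Nat.lt_find_iff_of_downward_closed _ (fun i k hk => S.V_left i j k hk) i

def toThresholdCover : ThresholdCover m n where
  a := S.hThreshold
  b := S.vThreshold
  a_le _ := Nat.find_min' _ (S.H_eq_false_of_not_bound (by omega))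
  a_eq_zero _ hi := Nat.le_zero.1 (Nat.find_min' _ (S.H_eq_false_of_not_bound (by omega)))
  b_le _ := Nat.find_min' _ (S.V_eq_false_of_not_bound (by omega))
  b_eq_zero _ hj := Nat.le_zero.1 (Nat.find_min' _ (S.V_eq_false_of_not_bound (by omega)))
  a_le_of_b_eq i j hb := by
    by_contra! ha
    have := S.sq₁ i j ((S.H_iff i j).2 (by omega)) ((S.H_iff i (j + 1)).2 ha)
      ((S.V_iff i j).2 (by omega))
    rw [S.V_iff] at this
    omega
  b_le_of_a_eq i j ha := by
    by_contra! hb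
    have := S.sq₃ i j ((S.H_iff i j).2 (by omega)) ((S.V_iff i j).2 (by omega))
      ((S.V_iff (i + 1) j).2 hb)
    rw [S.H_iff] at this
    omega

end SatCover

namespace ThresholdCover

variable {m n : ℕ} (C : ThresholdCover m n)

def toSatCover : SatCover m n where
  H i j := decide (j < C.a i)
  V i j := decide (i < C.b j)
  H_bound i j h := by
    have := C.a_le i
    have := C.a_eq_zero i
    simp only [decide_eq_true_eq] at h
    omega
  V_bound i j h := by
    have := C.b_le j
    have := C.b_eq_zero j
    simp only [decide_eq_true_eq] at h
    omega
  H_down i j k hk h := by simp only [decide_eq_true_eq] at *; omega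
  V_left i j k hk h := by simp only [decide_eq_true_eq] at *; omega
  sq₁ i j _ h₂ h₃ := by
    have := C.a_le_of_b_eq i j
    simp only [decide_eq_true_eq] at *
    omega
  sq₂ i j _ _ h₃ := by simp only [decide_eq_true_eq] at *; omega
  sq₃ i j h₁ _ h₃ := by
    have := C.b_le_of_a_eq i j
    simp only [decide_eq_true_eq] at *
    omega
  sq₄ i j h₁ _ _ := by simp only [decide_eq_true_eq] at *; omega

end ThresholdCover

def SatCover.equivThresholdCover (m n : ℕ) : SatCover m n ≃ ThresholdCover m n where
  toFun S := S.toThresholdCover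
  invFun C := C.toSatCover
  left_inv S := by
    ext i j
    · exact Bool.eq_iff_iff.2 (decide_eq_true_iff.trans (S.H_iff i j).symm)
    · exact Bool.eq_iff_iff.2 (decide_eq_true_iff.trans (S.V_iff i j).symm)
  right_inv C := by
    ext i
    · exact eq_of_forall_lt_iff fun j =>
        ((C.toSatCover.H_iff i j).symm.trans decide_eq_true_iff)
    · exact eq_of_forall_lt_iff fun j =>
        ((C.toSatCover.V_iff j i).symm.trans decide_eq_true_iff)

namespace Finset

def mex (A : Finset ℕ) : ℕ := Nat.find (Infinite.exists_notMem_finset A)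

variable {A : Finset ℕ} {i k m : ℕ}

theorem mex_notMem (A : Finset ℕ) : A.mex ∉ A := Nat.find_spec (Infinite.exists_notMem_finset A)

theorem mem_of_lt_mex (h : i < A.mex) : i ∈ A := not_not.1 (Nat.find_min _ h)

theorem mex_le_of_notMem (h : k ∉ A) : A.mex ≤ k := Nat.find_min' _ h

theorem mex_eq_iff : A.mex = k ↔ k ∉ A ∧ ∀ i < k, i ∈ A := by
  simp only [mex, Nat.find_eq_iff, not_not]

theorem mex_le_succ (hA : A ⊆ range (m + 1)) : A.mex ≤ m + 1 :=
  mex_le_of_notMem fun h => by simpa using hA h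

theorem mex_le_of_ssubset (hA : A ⊂ range (m + 1)) : A.mex ≤ m := by
  obtain ⟨x, hx, hxA⟩ := exists_of_ssubset hA
  exact (mex_le_of_notMem hxA).trans (Nat.lt_succ_iff.1 (mem_range.1 hx))

theorem mex_range (k : ℕ) : (range k).mex = k :=
  mex_eq_iff.2 ⟨by simp, fun _ => mem_range.2⟩

end Finset

open Finset

namespace ThresholdCover

variable {m n : ℕ}

/-- Threshold form of `cset m n S = A`. -/
def HasCSet (C : ThresholdCover m (n + 1)) (A : Finset ℕ) : Prop :=
  C.b n = A.mex ∧ ∀ i, A.mex ≤ i → i < m → (C.a i ≤ n + 1 ↔ i + 1 ∈ A)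

end ThresholdCover

namespace SatCover

variable {m n : ℕ}

theorem mem_cset_iff (S : SatCover m (n + 1)) (i : ℕ) :
    i ∈ cset m n S ↔ i ≤ m ∧
      (i < S.vThreshold n ∨ (S.vThreshold n < i ∧ S.hThreshold (i - 1) ≤ n + 1)) := by
  rw [cset, mem_filter, mem_range, S.V_iff, Bool.eq_false_iff, Ne, S.V_iff,
    Bool.eq_false_iff, Ne, S.H_iff]
  omega

theorem cset_eq_iff {A : Finset ℕ} (hA : A ⊆ range (m + 1)) (S : SatCover m (n + 1)) :
    cset m n S = A ↔ S.toThresholdCover.HasCSet A := by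
  have hk : S.vThreshold n ≤ m + 1 := S.toThresholdCover.b_le n
  simp only [Finset.ext_iff, mem_cset_iff, ThresholdCover.HasCSet]
  change _ ↔ S.vThreshold n = _ ∧ ∀ i, _ → _ → (S.hThreshold i ≤ n + 1 ↔ _)
  constructor
  · intro h
    have hmex : A.mex = S.vThreshold n :=
      mex_eq_iff.2 ⟨fun hA => by have := (h _).2 hA; omega,
        fun i hi => (h i).1 ⟨by omega, Or.inl hi⟩⟩
    refine ⟨hmex.symm, fun i hi him => ?_⟩
    rw [← h]
    simp only [Nat.add_sub_cancel]
    omega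
  · rintro ⟨hmex, hA'⟩ i
    rcases lt_trichotomy i (S.vThreshold n) with hi | rfl | hi
    · simpa [hi, show i ≤ m by omega] using mem_of_lt_mex (hmex ▸ hi)
    · simpa [hmex] using mex_notMem A
    · by_cases him : i ≤ m
      · have := hA' (i - 1) (by omega) (by omega)
        rw [Nat.sub_add_cancel (by omega)] at this
        simp only [him, hi, true_and, lt_asymm hi, false_or]
        exact this
      · simpa [him] using fun h => him (Nat.lt_succ_iff.1 (mem_range.1 (hA h)))

end SatCover

/-- The columns that survive compression: for `A.mex ≤ i < m` with `i + 1 ∉ A`, the condition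
`cset m n S = A` forces column `i` to be full. -/
def IsKept (m : ℕ) (A : Finset ℕ) (i : ℕ) : Prop := i < m ∧ (i < A.mex ∨ i + 1 ∈ A)

instance (m : ℕ) (A : Finset ℕ) : DecidablePred (IsKept m A) :=
  fun _ => inferInstanceAs (Decidable (_ ∧ _))

namespace ThresholdCover

variable {m n : ℕ} {A : Finset ℕ} {i j : ℕ}

section Compress

variable {C : ThresholdCover m (n + 1)}

theorem HasCSet.a_eq_of_not_isKept (h : C.HasCSet A) (hi : i < m) (hk : ¬ IsKept m A i) :
    C.a i = n + 2 := by
  simp only [IsKept, hi, true_and, not_or, not_lt] at hk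
  have := (h.2 i hk.1 hi).not.2 hk.2
  have := C.a_le i
  omega

theorem HasCSet.isKept_or_eq (h : C.HasCSet A) (hj : j ≤ n) (hb : C.b j ≠ 0) :
    IsKept m A (C.b j - 1) ∧ C.b j - 1 < m ∨ C.b j - 1 = m := by
  have := C.b_le j
  by_cases hk : IsKept m A (C.b j - 1)
  · exact Or.inl ⟨hk, hk.1⟩
  · by_contra hm
    have := h.a_eq_of_not_isKept (by omega) hk
    have := C.a_le_of_b_eq (C.b j - 1) j (by omega)
    omega

theorem HasCSet.lt_mex_of_a_eq (h : C.HasCSet A) (hk : IsKept m A i) (ha : C.a i = n + 2) :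
    i + 1 < A.mex := by
  by_contra hle
  rcases hk with ⟨hi, hlt | hmem⟩
  · have := C.a_le_of_b_eq i n (by rw [h.1]; omega)
    omega
  · have hne : A.mex ≠ i + 1 := fun he => mex_notMem A (he ▸ hmem)
    have := (h.2 i (by omega) hi).2 hmem
    omega

theorem HasCSet.mex_le_of_a_eq (h : C.HasCSet A) (ha : C.a i = n + 1) : A.mex ≤ i + 1 :=
  h.1 ▸ C.b_le_of_a_eq i n ha

variable (C) in
@[simps]
noncomputable def compress (h : C.HasCSet A) :
    ThresholdCover (Nat.count (IsKept m A) m) n where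
  a t := min (C.a (Nat.nthBelow (IsKept m A) m t)) (n + 1)
  b j := if j < n ∧ C.b j ≠ 0 then Nat.count (IsKept m A) (C.b j - 1) + 1 else 0
  a_le _ := min_le_right _ _
  a_eq_zero t ht := by
    rw [Nat.nthBelow_of_count_le ht, C.a_eq_zero m le_rfl]
    exact zero_min _
  b_le j := by
    have := C.b_le j
    have := Nat.count_monotone (IsKept m A) (show C.b j - 1 ≤ m by omega)
    split_ifs <;> omega
  b_eq_zero j hj := if_neg fun h => by omega
  a_le_of_b_eq t j hb := by
    split_ifs at hb with hj
    have hbj := Nat.nthBelow_count (h.isKept_or_eq (by omega) hj.2)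
    have := C.a_le_of_b_eq (C.b j - 1) j (by omega)
    rw [show t = Nat.count (IsKept m A) (C.b j - 1) by omega, hbj]
    omega
  b_le_of_a_eq t j ha := by
    have ht : t ≤ Nat.count (IsKept m A) m := by
      by_contra! ht
      rw [Nat.nthBelow_of_count_le ht.le, C.a_eq_zero m le_rfl] at ha
      omega
    split_ifs with hj
    · have := C.b_le_of_a_eq _ j (show C.a (Nat.nthBelow (IsKept m A) m t) = j + 1 by omega)
      have := Nat.count_monotone (IsKept m A)
        (show C.b j - 1 ≤ Nat.nthBelow (IsKept m A) m t by omega)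
      rw [Nat.count_nthBelow ht] at this
      omega
    · omega

end Compress

section Expand

variable (A) in
/-- Columns of height `n + 1` and `n + 2` both compress to height `n + 1`; the cover on
`[m] × [n + 1]` is recovered because the square axioms at height `n` rule out height `n + 1`
exactly for the columns left of `A.mex - 1`. -/
noncomputable def expandA (C : ThresholdCover (Nat.count (IsKept m A) m) n) (i : ℕ) : ℕ :=
  if IsKept m A i then
    if C.a (Nat.count (IsKept m A) i) = n + 1 ∧ i + 1 < A.mex then n + 2
    else C.a (Nat.count (IsKept m A) i)
  else if i < m then n + 2 else 0

variable {C : ThresholdCover (Nat.count (IsKept m A) m) n}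

theorem expandA_of_isKept (hk : IsKept m A i)
    (h : C.a (Nat.count (IsKept m A) i) ≠ n + 1 ∨ A.mex ≤ i + 1) :
    expandA A C i = C.a (Nat.count (IsKept m A) i) := by
  rw [expandA, if_pos hk, if_neg (by omega)]

theorem expandA_of_not_isKept (hk : ¬ IsKept m A i) (hi : i < m) : expandA A C i = n + 2 := by
  rw [expandA, if_neg hk, if_pos hi]

theorem expandA_of_le (hi : m ≤ i) : expandA A C i = 0 := by
  rw [expandA, if_neg fun hk => by have := hk.1; omega, if_neg (by omega)]

theorem min_expandA (hk : IsKept m A i) :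
    min (expandA A C i) (n + 1) = C.a (Nat.count (IsKept m A) i) := by
  have := C.a_le (Nat.count (IsKept m A) i)
  rw [expandA, if_pos hk]
  split_ifs <;> omega

theorem expandA_le (i : ℕ) : expandA A C i ≤ n + 2 := by
  have := C.a_le (Nat.count (IsKept m A) i)
  unfold expandA
  split_ifs <;> omega

variable (A) in
noncomputable def expandB (C : ThresholdCover (Nat.count (IsKept m A) m) n) (j : ℕ) : ℕ :=
  if j = n then A.mex
  else if C.b j = 0 then 0 else Nat.nthBelow (IsKept m A) m (C.b j - 1) + 1

theorem expandB_self : expandB A C n = A.mex := if_pos rfl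

theorem expandB_of_ne (hj : j ≠ n) :
    expandB A C j = if C.b j = 0 then 0 else Nat.nthBelow (IsKept m A) m (C.b j - 1) + 1 :=
  if_neg hj

variable (C) in
@[simps]
noncomputable def expand (hA : A ⊆ range (m + 1)) : ThresholdCover m (n + 1) where
  a := expandA A C
  b := expandB A C
  a_le := expandA_le
  a_eq_zero _ := expandA_of_le
  b_le j := by
    have := mex_le_succ hA
    have := Nat.nthBelow_le (p := IsKept m A) (N := m) (k := C.b j - 1)
    unfold expandB
    split_ifs <;> omega
  b_eq_zero j hj := by
    rw [expandB_of_ne (by omega), if_pos (C.b_eq_zero j (by omega))]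
  a_le_of_b_eq i j hb := by
    by_cases hjn : j = n
    · subst hjn
      rw [expandB_self] at hb
      by_cases him : i < m
      · rw [expandA_of_isKept ⟨him, Or.inl (by omega)⟩ (Or.inr hb.le)]
        exact C.a_le _
      · rw [expandA_of_le (not_lt.1 him)]
        omega
    · rw [expandB_of_ne hjn] at hb
      split_ifs at hb with hb0
      have hjn' : j < n := by
        by_contra
        exact hb0 (C.b_eq_zero j (by omega))
      have := C.b_le j
      obtain rfl : i = Nat.nthBelow (IsKept m A) m (C.b j - 1) := by omega
      rcases (show C.b j - 1 < Nat.count (IsKept m A) m ∨ C.b j - 1 = Nat.count (IsKept m A) m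
        by omega) with ht | ht
      · have := C.a_le_of_b_eq (C.b j - 1) j (by omega)
        rw [expandA_of_isKept (Nat.nthBelow_mem ht) (by rw [Nat.count_nthBelow ht.le]; omega),
          Nat.count_nthBelow ht.le]
        exact this
      · rw [ht, Nat.nthBelow_of_count_le le_rfl, expandA_of_le le_rfl]
        omega
  b_le_of_a_eq i j ha := by
    rcases lt_or_ge i m with him | him
    swap
    · rw [expandA_of_le him] at ha
      omega
    have hC := C.a_le (Nat.count (IsKept m A) i)
    by_cases hkr : IsKept m A i ∧ ¬ (C.a (Nat.count (IsKept m A) i) = n + 1 ∧ i + 1 < A.mex)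
    · obtain ⟨hk, hraise⟩ := hkr
      rw [expandA_of_isKept hk (by omega)] at ha
      by_cases hjn : j = n
      · subst hjn
        rw [expandB_self]
        omega
      · rw [expandB_of_ne hjn]
        have hcb := C.b_le_of_a_eq _ j ha
        split_ifs with hb0
        · omega
        · have := Nat.nthBelow_mono (p := IsKept m A) (N := m)
            (show C.b j - 1 ≤ Nat.count (IsKept m A) i by omega)
          rw [Nat.nthBelow_count (Or.inl ⟨hk, him⟩)] at this
          omega
    · have : expandA A C i = n + 2 := by
        unfold expandA
        split_ifs <;> tauto
      rw [expandB_of_ne (by omega), if_pos (C.b_eq_zero j (by omega))]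
      omega

end Expand

theorem expand_hasCSet (hA : A ⊆ range (m + 1))
    (C : ThresholdCover (Nat.count (IsKept m A) m) n) :
    (C.expand hA).HasCSet A := by
  refine ⟨expandB_self, fun i hi him => ?_⟩
  rw [expand_a]
  by_cases hk : IsKept m A i
  · have hmem : i + 1 ∈ A := hk.2.resolve_left (by omega)
    rw [expandA_of_isKept hk (Or.inr (by omega))]
    simpa [hmem] using C.a_le _
  · have hmem : i + 1 ∉ A := fun h => hk ⟨him, Or.inr h⟩
    rw [expandA_of_not_isKept hk him]
    simp [hmem]

theorem compress_expand (hA : A ⊆ range (m + 1))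
    (C : ThresholdCover (Nat.count (IsKept m A) m) n) :
    (C.expand hA).compress (expand_hasCSet hA C) = C := by
  ext t
  · rw [compress_a, expand_a]
    rcases lt_or_ge t (Nat.count (IsKept m A) m) with ht | ht
    · rw [min_expandA (Nat.nthBelow_mem ht), Nat.count_nthBelow ht.le]
    · rw [Nat.nthBelow_of_count_le ht, expandA_of_le le_rfl, C.a_eq_zero t ht, zero_min]
  · rw [compress_b, expand_b]
    rcases lt_or_ge t n with htn | htn
    · have := C.b_le t
      rw [expandB_of_ne htn.ne]
      by_cases h0 : C.b t = 0
      · simp [h0]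
      · rw [if_neg h0, if_pos ⟨htn, by omega⟩, Nat.add_sub_cancel,
          Nat.count_nthBelow (by omega)]
        omega
    · rw [if_neg (by omega), C.b_eq_zero t htn]

theorem expand_compress (hA : A ⊆ range (m + 1)) {C : ThresholdCover m (n + 1)}
    (h : C.HasCSet A) : (C.compress h).expand hA = C := by
  ext i
  · rw [expand_a]
    rcases lt_or_ge i m with him | him
    swap
    · rw [expandA_of_le him, C.a_eq_zero i him]
    by_cases hk : IsKept m A i
    · have hci : (C.compress h).a (Nat.count (IsKept m A) i) = min (C.a i) (n + 1) := by
        rw [compress_a, Nat.nthBelow_count (Or.inl ⟨hk, him⟩)]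
      have := C.a_le i
      rcases (show C.a i ≤ n ∨ C.a i = n + 1 ∨ C.a i = n + 2 by omega) with ha | ha | ha
      · rw [expandA_of_isKept hk (by omega), hci]
        omega
      · rw [expandA_of_isKept hk (Or.inr (h.mex_le_of_a_eq ha)), hci]
        omega
      · rw [expandA, if_pos hk, hci, if_pos ⟨by omega, h.lt_mex_of_a_eq hk ha⟩, ha]
    · rw [expandA_of_not_isKept hk him, h.a_eq_of_not_isKept him hk]
  · rw [expand_b]
    by_cases hin : i = n
    · rw [hin, expandB_self, h.1]
    · rw [expandB_of_ne hin, compress_b]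
      by_cases hi : i < n ∧ C.b i ≠ 0
      · rw [if_pos hi, if_neg (by omega), Nat.add_sub_cancel,
          Nat.nthBelow_count (h.isKept_or_eq hi.1.le hi.2)]
        omega
      · have : C.b i = 0 := by
          by_contra h0
          exact hi ⟨by by_contra; exact h0 (C.b_eq_zero i (by omega)), h0⟩
        rw [if_neg hi, if_pos rfl, this]

noncomputable def compressEquiv (hA : A ⊆ range (m + 1)) :
    {C : ThresholdCover m (n + 1) // C.HasCSet A} ≃
      ThresholdCover (Nat.count (IsKept m A) m) n where
  toFun C := C.1.compress C.2
  invFun C := ⟨C.expand hA, expand_hasCSet hA C⟩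
  left_inv C := Subtype.ext (expand_compress hA C.2)
  right_inv C := compress_expand hA C

end ThresholdCover

theorem card_cset_eq {m n : ℕ} {A : Finset ℕ} (hA : A ⊆ range (m + 1)) :
    Nat.card {S : SatCover m (n + 1) // cset m n S = A} = satCount (Nat.count (IsKept m A) m) n :=
  Nat.card_congr <|
    ((SatCover.equivThresholdCover m (n + 1)).subtypeEquiv fun S => S.cset_eq_iff hA).trans <|
      (ThresholdCover.compressEquiv hA).trans (SatCover.equivThresholdCover _ n).symm

theorem count_isKept_range (m : ℕ) : Nat.count (IsKept m (range (m + 1))) m = m :=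
  Nat.count_of_forall fun i hi => ⟨hi, Or.inl (by rw [mex_range]; omega)⟩

theorem count_isKept_of_ssubset {m : ℕ} {A : Finset ℕ} (hA : A ⊂ range (m + 1)) :
    Nat.count (IsKept m A) m = A.card := by
  have hmex := mex_le_of_ssubset hA
  have hmem : ∀ x ∈ A, x ≤ m := fun x hx => Nat.lt_succ_iff.1 (mem_range.1 (hA.subset hx))
  rw [Nat.count_eq_card_filter_range]
  refine card_nbij' (fun i => if i < A.mex then i else i + 1)
    (fun x => if x < A.mex then x else x - 1) ?_ ?_ ?_ ?_
  · intro i hi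
    obtain ⟨-, -, hk⟩ := mem_filter.1 (mem_coe.1 hi)
    dsimp only
    split_ifs with h
    · exact mem_of_lt_mex h
    · exact hk.resolve_left h
  · intro x hx
    have hne : x ≠ A.mex := fun h => mex_notMem A (h ▸ hx)
    have := hmem x hx
    simp only [mem_coe, mem_filter, mem_range]
    split_ifs with h
    · exact ⟨by omega, by omega, Or.inl h⟩
    · refine ⟨by omega, by omega, Or.inr ?_⟩
      rwa [Nat.sub_add_cancel (by omega)]
  · intro i _
    dsimp only
    split_ifs <;> omega
  · intro x hx
    have hne : x ≠ A.mex := fun h => mex_notMem A (h ▸ hx)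
    dsimp only
    split_ifs <;> omega

theorem stmt_14 (m n : ℕ) :
    (∀ A : Finset ℕ, A ⊂ Finset.range (m + 1) →
      Nat.card {S : SatCover m (n + 1) // cset m n S = A} = satCount A.card n) ∧
    Nat.card {S : SatCover m (n + 1) // cset m n S = Finset.range (m + 1)} =
      satCount m n :=
  ⟨fun A hA => by rw [card_cset_eq hA.subset, count_isKept_of_ssubset hA],
    by rw [card_cset_eq subset_rfl, count_isKept_range]⟩
end

section
/- Let q ≥ 3 and n ≥ 0, and let T ⊆ ℤ/q^{n+1}ℤ be a set whose elements, represented in {0,...,q^{n+1}−1}, all lie in [0, q^n − 1] ∪ [q^{n+1} − q^n + 1, q^{n+1} − 1], with 0 ∈ T and T containing some nonzero element. Then T + q^n ≠ T in ℤ/q^{n+1}ℤ. -/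
theorem stmt_17 (q n : ℕ) (hq : 3 ≤ q) (T : Set (ZMod (q ^ (n + 1)))) (hT0 : 0 ∈ T)
    (hTrange : ∀ x ∈ T, x.val < q ^ n ∨ q ^ (n + 1) - q ^ n + 1 ≤ x.val)
    (hTne : ∃ x ∈ T, x ≠ 0) :
    (fun x => x + ((q ^ n : ℕ) : ZMod (q ^ (n + 1)))) '' T ≠ T := by
  intro h
  have hmem : ((q ^ n : ℕ) : ZMod (q ^ (n + 1))) ∈ T := by
    rw [← h]; exact ⟨0, hT0, by simp⟩
  have hlt : q ^ n < q ^ (n + 1) := by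
    have h1 : q ^ (n + 1) = q ^ n * q := pow_succ q n
    have h2 : 1 ≤ q ^ n := Nat.one_le_pow _ _ (by omega)
    nlinarith
  haveI : NeZero (q ^ (n + 1)) := ⟨by positivity⟩
  have hval : ((q ^ n : ℕ) : ZMod (q ^ (n + 1))).val = q ^ n :=
    ZMod.val_natCast_of_lt hlt
  have h3 : q ^ (n + 1) = q ^ n * q := pow_succ q n
  have h2 : 1 ≤ q ^ n := Nat.one_le_pow _ _ (by omega)
  have h4 : 3 * q ^ n ≤ q ^ n * q := by nlinarith
  rcases hTrange _ hmem with h5 | h5 <;> omega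
end
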